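/- Characterization of the staged tree model as the image of its parametrization: for any staging κ of 𝕏, a probability mass function P on 𝕏 lies in the image of the map φ_κ : Θ_κ → Δ if and only if P is strictly positive and, for every i ∈ {1, …, p−1} and all x, x' ∈ 𝕏_{[i]} with κ_i(x) = κ_i(x'), the conditional distributions P(X_{i+1} = · | (X_1, …, X_i) = x) and P(X_{i+1} = · | (X_1, …, X_i) = x') coincide; that is, the image of φ_κ equals M_κ. -/
import Mathlib


open scoped Classical

/-- Full configurations of the `p` variables `X 0, …, X (p-1)`. -/
abbrev Cfg {p : ℕ} (X : Fin p → Type) : Type := ∀ j : Fin p, X j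

/-- Prefixes of length `i`: assignments of values to the first `i` variables. -/
abbrev Pref {p : ℕ} (X : Fin p → Type) (i : ℕ) : Type :=
  ∀ j : Fin p, (j : ℕ) < i → X j

/-- The full configuration `y` extends the prefix `x`. -/
def Agrees {p : ℕ} {X : Fin p → Type} {i : ℕ} (y : Cfg X) (x : Pref X i) : Prop :=
  ∀ (j : Fin p) (h : (j : ℕ) < i), y j = x j h

/-- The probability (under the mass function `P`) that the first `i` variables take the
values prescribed by the prefix `x`. -/
noncomputable def prefProb {p : ℕ} {X : Fin p → Type} [∀ j, Fintype (X j)]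
    (P : Cfg X → ℝ) {i : ℕ} (x : Pref X i) : ℝ :=
  ∑ y : Cfg X, if Agrees y x then P y else 0

/-- The conditional probability `P(X_{i+1} = z | (X_1, …, X_i) = x)` (with `i` zero-based:
the variable indexed by `i : Fin p` given the values `x` of the preceding variables). -/
noncomputable def condProb {p : ℕ} {X : Fin p → Type} [∀ j, Fintype (X j)]
    (P : Cfg X → ℝ) (i : Fin p) (x : Pref X i.1) (z : X i) : ℝ :=
  (∑ y : Cfg X, if Agrees y x ∧ y i = z then P y else 0) / prefProb P x

/-- Membership in the staged tree model `M_κ` of the staging `κ`: `P` is a strictly positive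
probability mass function whose conditional distributions coincide on vertices in the
same stage, at every level `i ∈ {1, …, p-1}` (zero-based: `1 ≤ i < p`). -/
def MemStagedModel {p : ℕ} {X : Fin p → Type} [∀ j, Fintype (X j)] {C : Type*}
    (κ : (i : Fin p) → Pref X i.1 → C) (P : Cfg X → ℝ) : Prop :=
  (∀ y : Cfg X, 0 < P y) ∧ (∑ y : Cfg X, P y = 1) ∧
    ∀ i : Fin p, 1 ≤ (i : ℕ) → ∀ x x' : Pref X i.1, κ i x = κ i x' →
      ∀ z : X i, condProb P i x z = condProb P i x' z

/-- Membership in the Bayesian network model `M_G` of a DAG on `{1, …, p}` whose edges all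
point from lower to higher indices; the DAG is encoded by its edge relation `E`
(`E j i` means there is an edge from `j` to `i`, i.e. `j` is a parent of `i`). -/
def MemBNModel {p : ℕ} {X : Fin p → Type} [∀ j, Fintype (X j)]
    (E : Fin p → Fin p → Prop) (P : Cfg X → ℝ) : Prop :=
  (∀ y : Cfg X, 0 ≤ P y) ∧ (∑ y : Cfg X, P y = 1) ∧
    ∃ g : (i : Fin p) → X i → ((j : Fin p) → E j i → X j) → ℝ,
      (∀ (i : Fin p) (z : X i) (par : (j : Fin p) → E j i → X j),
        g i z par ∈ Set.Ioo (0 : ℝ) 1) ∧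
      (∀ (i : Fin p) (par : (j : Fin p) → E j i → X j), ∑ z : X i, g i z par = 1) ∧
      (∀ y : Cfg X, P y = ∏ i : Fin p, g i (y i) (fun j _ => y j))

/-- The edge relation of the DAG `G_κ` associated to a staging `κ`: there is an edge
from `k` to `i` iff `k < i` and there are two prefixes of length `i` differing only in
coordinate `k` that receive different colors. -/
def stagingEdge {p : ℕ} {X : Fin p → Type} {C : Type*}
    (κ : (i : Fin p) → Pref X i.1 → C) (k i : Fin p) : Prop :=
  (k : ℕ) < (i : ℕ) ∧ ∃ x x' : Pref X i.1,
    (∀ (j : Fin p) (h : (j : ℕ) < (i : ℕ)), j ≠ k → x j h = x' j h) ∧ κ i x ≠ κ i x'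

/-- The staging `κ^G` induced by a DAG with edge relation `E` (all of whose edges point
from lower to higher indices): the color of a prefix of length `i` is its projection onto
the parent coordinates of vertex `i`. -/
def indStaging {p : ℕ} {X : Fin p → Type} (E : Fin p → Fin p → Prop)
    (hE : ∀ k i : Fin p, E k i → (k : ℕ) < (i : ℕ)) :
    (i : Fin p) → Pref X i.1 → ((i : Fin p) × ((j : Fin p) → E j i → X j)) :=
  fun i x => ⟨i, fun j h => x j (hE j i h)⟩

section Aux

variable {p : ℕ} {X : Fin p → Type} [∀ j, Fintype (X j)]

lemma agrees_zero (y : Cfg X) (x : Pref X 0) : Agrees y x :=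
  fun _ h => absurd h (Nat.not_lt_zero _)

lemma prefProb_zero (P : Cfg X → ℝ) (x : Pref X 0) : prefProb P x = ∑ y, P y :=
  Finset.sum_congr rfl fun y _ => if_pos (agrees_zero y x)

lemma prefProb_top (P : Cfg X → ℝ) (v : Cfg X) :
    prefProb P (fun j (_ : (j : ℕ) < p) => v j) = P v := by
  unfold prefProb
  rw [Finset.sum_eq_single v]
  · rw [if_pos]; intro j h; rfl
  · intro y _ hy
    rw [if_neg]
    intro hA
    exact hy (funext fun j => hA j j.isLt)
  · intro h; exact absurd (Finset.mem_univ v) h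

lemma agrees_succ (i : Fin p) (y v : Cfg X) (z : X i) :
    Agrees y (fun j (_ : (j : ℕ) < (i : ℕ) + 1) => Function.update v i z j) ↔
      (Agrees y (fun j (_ : (j : ℕ) < (i : ℕ)) => v j) ∧ y i = z) := by
  constructor
  · intro h
    refine ⟨fun j hj => ?_, ?_⟩
    · have h1 : y j = Function.update v i z j := h j (Nat.lt_succ_of_lt hj)
      rw [h1, Function.update_of_ne (fun he => by rw [Fin.ext_iff] at he; omega)]
    · have h1 : y i = Function.update v i z i := h i (Nat.lt_succ_self _)
      rw [h1, Function.update_self]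
  · rintro ⟨h1, h2⟩ j hj
    show y j = Function.update v i z j
    rcases Nat.lt_succ_iff_lt_or_eq.mp hj with hj' | hj'
    · rw [Function.update_of_ne (fun he => by rw [Fin.ext_iff] at he; omega)]
      exact h1 j hj'
    · have hji : j = i := Fin.ext hj'
      subst hji
      rw [Function.update_self]; exact h2

lemma condProb_num (P : Cfg X → ℝ) (i : Fin p) (v : Cfg X) (z : X i) :
    (∑ y : Cfg X, if Agrees y (fun j (_ : (j : ℕ) < (i : ℕ)) => v j) ∧ y i = z then P y else 0)
      = prefProb P (fun j (_ : (j : ℕ) < (i : ℕ) + 1) => Function.update v i z j) := by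
  unfold prefProb
  exact Finset.sum_congr rfl fun y _ => by rw [if_congr (agrees_succ i y v z) rfl rfl]

lemma prefProb_succ (P : Cfg X → ℝ) (i : Fin p) (v : Cfg X) :
    prefProb P (fun j (_ : (j : ℕ) < (i : ℕ)) => v j) =
      ∑ z : X i, prefProb P (fun j (_ : (j : ℕ) < (i : ℕ) + 1) => Function.update v i z j) := by
  have h1 : ∀ z, prefProb P (fun j (_ : (j : ℕ) < (i : ℕ) + 1) => Function.update v i z j)
      = ∑ y : Cfg X, if Agrees y (fun j (_ : (j : ℕ) < (i : ℕ)) => v j) ∧ y i = z then P y else 0 :=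
    fun z => (condProb_num P i v z).symm
  simp only [h1]
  rw [Finset.sum_comm]
  unfold prefProb
  refine Finset.sum_congr rfl fun y _ => ?_
  by_cases hA : Agrees y (fun j (_ : (j : ℕ) < (i : ℕ)) => v j)
  · rw [if_pos hA, Finset.sum_congr rfl (fun z _ => by rw [if_congr (and_iff_right hA) rfl rfl])]
    simp
  · rw [if_neg hA]
    simp [hA]

noncomputable def cfgOf (hne : ∀ j, Nonempty (X j)) {m : ℕ} (x : Pref X m) : Cfg X :=
  fun j => if h : (j : ℕ) < m then x j h else (hne j).some

lemma agrees_cfgOf (hne : ∀ j, Nonempty (X j)) {m : ℕ} (x : Pref X m) :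
    Agrees (cfgOf hne x) x :=
  fun j h => dif_pos h

lemma prefProb_pos (hne : ∀ j, Nonempty (X j)) {P : Cfg X → ℝ} (hpos : ∀ y, 0 < P y)
    {m : ℕ} (x : Pref X m) : 0 < prefProb P x := by
  unfold prefProb
  refine Finset.sum_pos' (fun y _ => ?_) ⟨cfgOf hne x, Finset.mem_univ _, ?_⟩
  · by_cases h : Agrees y x
    · rw [if_pos h]; exact (hpos y).le
    · rw [if_neg h]
  · rw [if_pos (agrees_cfgOf hne x)]; exact hpos _

lemma condProb_pos (hne : ∀ j, Nonempty (X j)) {P : Cfg X → ℝ} (hpos : ∀ y, 0 < P y)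
    (i : Fin p) (x : Pref X i.1) (z : X i) : 0 < condProb P i x z := by
  apply div_pos ?_ (prefProb_pos hne hpos x)
  refine Finset.sum_pos' (fun y _ => ?_) ⟨Function.update (cfgOf hne x) i z, Finset.mem_univ _, ?_⟩
  · by_cases h : Agrees y x ∧ y i = z
    · rw [if_pos h]; exact (hpos y).le
    · rw [if_neg h]
  · have hA : Agrees (Function.update (cfgOf hne x) i z) x ∧
        Function.update (cfgOf hne x) i z i = z := by
      refine ⟨fun j hj => ?_, Function.update_self _ _ _⟩
      rw [Function.update_of_ne (fun he => by rw [Fin.ext_iff] at he; omega)]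
      exact agrees_cfgOf hne x j hj
    rw [if_pos hA]
    exact hpos _

lemma condProb_sum {P : Cfg X → ℝ} {i : Fin p} {x : Pref X i.1}
    (hx : prefProb P x ≠ 0) : ∑ z : X i, condProb P i x z = 1 := by
  unfold condProb
  rw [← Finset.sum_div, div_eq_one_iff_eq hx, Finset.sum_comm]
  unfold prefProb
  refine Finset.sum_congr rfl fun y _ => ?_
  by_cases hA : Agrees y x
  · rw [if_pos hA, Finset.sum_congr rfl (fun z _ => by rw [if_congr (and_iff_right hA) rfl rfl])]
    simp
  · rw [if_neg hA]
    simp [hA]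

lemma condProb_lt_one (hne : ∀ j, Nonempty (X j)) (h2 : ∀ j, 2 ≤ Fintype.card (X j))
    {P : Cfg X → ℝ} (hpos : ∀ y, 0 < P y) (i : Fin p) (x : Pref X i.1) (z : X i) :
    condProb P i x z < 1 := by
  obtain ⟨z', hz'⟩ := Fintype.exists_ne_of_one_lt_card (by have := h2 i; omega) z
  calc condProb P i x z
      < ∑ w : X i, condProb P i x w :=
        Finset.single_lt_sum hz' (Finset.mem_univ _) (Finset.mem_univ _)
          (condProb_pos hne hpos i x z') (fun k _ _ => (condProb_pos hne hpos i x k).le)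
    _ = 1 := condProb_sum (prefProb_pos hne hpos x).ne'

lemma filter_succ_eq {m : ℕ} (hm : m < p) :
    Finset.univ.filter (fun i : Fin p => (i : ℕ) < m + 1) =
      insert ⟨m, hm⟩ (Finset.univ.filter (fun i : Fin p => (i : ℕ) < m)) := by
  ext i
  simp only [Finset.mem_filter, Finset.mem_univ, true_and, Finset.mem_insert, Fin.ext_iff]
  omega

lemma mk_not_mem_filter {m : ℕ} (hm : m < p) :
    (⟨m, hm⟩ : Fin p) ∉ Finset.univ.filter (fun i : Fin p => (i : ℕ) < m) := by
  simp


lemma stagedFactorization {P : Cfg X → ℝ} {f : Fin p → Cfg X → ℝ}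
    (hloc : ∀ (i : Fin p) (v w : Cfg X), (∀ j : Fin p, (j : ℕ) ≤ (i : ℕ) → v j = w j) →
      f i v = f i w)
    (hsum : ∀ (i : Fin p) (v : Cfg X), ∑ z : X i, f i (Function.update v i z) = 1)
    (hP : ∀ v, P v = ∏ i, f i v) :
    ∀ k m, m + k = p → ∀ v : Cfg X,
      prefProb P (fun j (_ : (j : ℕ) < m) => v j) =
        ∏ i ∈ Finset.univ.filter (fun i : Fin p => (i : ℕ) < m), f i v := by
  intro k
  induction k with
  | zero =>
    intro m hm v
    have hmp : m = p := by omega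
    subst hmp
    rw [prefProb_top, hP, Finset.filter_true_of_mem (fun i _ => i.isLt)]
  | succ k ih =>
    intro m hm v
    have hm' : m < p := by omega
    rw [prefProb_succ P ⟨m, hm'⟩ v]
    have hstep : ∀ z : X (⟨m, hm'⟩ : Fin p),
        prefProb P (fun j (_ : (j : ℕ) < m + 1) => Function.update v ⟨m, hm'⟩ z j) =
          f ⟨m, hm'⟩ (Function.update v ⟨m, hm'⟩ z) *
            ∏ i ∈ Finset.univ.filter (fun i : Fin p => (i : ℕ) < m), f i v := by
      intro z
      rw [ih (m + 1) (by omega) (Function.update v ⟨m, hm'⟩ z), filter_succ_eq hm',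
        Finset.prod_insert (mk_not_mem_filter hm')]
      congr 1
      refine Finset.prod_congr rfl fun i hi => ?_
      rw [Finset.mem_filter] at hi
      refine hloc i _ _ fun j hj => ?_
      rw [Function.update_of_ne (fun he => by rw [Fin.ext_iff] at he; simp at he; omega)]
    simp only [hstep]
    rw [← Finset.sum_mul, hsum, one_mul]

lemma stagedChain {P : Cfg X → ℝ} (hpos : ∀ y, 0 < P y) (hsum : ∑ y, P y = 1)
    (hne : ∀ j, Nonempty (X j)) :
    ∀ m, m ≤ p → ∀ v : Cfg X,
      prefProb P (fun j (_ : (j : ℕ) < m) => v j) =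
        ∏ i ∈ Finset.univ.filter (fun i : Fin p => (i : ℕ) < m),
          condProb P i (fun j _ => v j) (v i) := by
  intro m
  induction m with
  | zero =>
    intro _ v
    rw [prefProb_zero P _, hsum]
    symm
    apply Finset.prod_eq_one
    intro i hi
    simp at hi
  | succ m ih =>
    intro hm v
    have hm' : m < p := hm
    have hden : prefProb P (fun j (_ : (j : ℕ) < m) => v j) ≠ 0 :=
      (prefProb_pos hne hpos _).ne'
    have hnum : (∑ y : Cfg X,
        if Agrees y (fun j (_ : (j : ℕ) < m) => v j) ∧ y ⟨m, hm'⟩ = v ⟨m, hm'⟩ then P y else 0)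
          = prefProb P (fun j (_ : (j : ℕ) < m + 1) => v j) := by
      rw [condProb_num P ⟨m, hm'⟩ v (v ⟨m, hm'⟩)]
      congr 1
      funext j hj
      rw [Function.update_eq_self]
    have hcp : condProb P ⟨m, hm'⟩ (fun j (_ : (j : ℕ) < m) => v j) (v ⟨m, hm'⟩) *
        prefProb P (fun j (_ : (j : ℕ) < m) => v j) =
          prefProb P (fun j (_ : (j : ℕ) < m + 1) => v j) := by
      rw [condProb, div_mul_cancel₀ _ hden, hnum]
    rw [← hcp, ih (by omega) v, filter_succ_eq hm',
      Finset.prod_insert (mk_not_mem_filter hm'), mul_comm]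
noncomputable def fFac {p : ℕ} (hp : 1 ≤ p) {X : Fin p → Type} {C : Type}
    (κ : (i : Fin p) → Pref X i.1 → C) (y0 : X ⟨0, hp⟩ → ℝ) (Y : (i : Fin p) → C → X i → ℝ)
    (i : Fin p) (v : Cfg X) : ℝ :=
  if 1 ≤ (i : ℕ) then Y i (κ i (fun j _ => v j)) (v i) else y0 (v ⟨0, hp⟩)

lemma filter_not_one_le {p : ℕ} (hp : 1 ≤ p) :
    Finset.univ.filter (fun i : Fin p => ¬ 1 ≤ (i : ℕ)) = {(⟨0, hp⟩ : Fin p)} := by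
  ext i
  simp only [Finset.mem_filter, Finset.mem_univ, true_and, Finset.mem_singleton, Fin.ext_iff]
  omega

lemma forward_dir {p : ℕ} (hp : 1 ≤ p) {X : Fin p → Type} [∀ j, Fintype (X j)]
    (hne : ∀ j, Nonempty (X j)) {C : Type} (κ : (i : Fin p) → Pref X i.1 → C)
    (P : Cfg X → ℝ) (y0 : X ⟨0, hp⟩ → ℝ) (Y : (i : Fin p) → C → X i → ℝ)
    (hy0 : ∀ z, y0 z ∈ Set.Ioo (0 : ℝ) 1) (hy0s : ∑ z, y0 z = 1)
    (hY : ∀ i : Fin p, 1 ≤ (i : ℕ) → ∀ c ∈ Set.range (κ i),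
      (∀ z : X i, Y i c z ∈ Set.Ioo (0 : ℝ) 1) ∧ (∑ z : X i, Y i c z = 1))
    (hPf : ∀ v : Cfg X, P v = y0 (v ⟨0, hp⟩) *
      ∏ i ∈ Finset.univ.filter (fun i : Fin p => 1 ≤ (i : ℕ)),
        Y i (κ i (fun j _ => v j)) (v i)) :
    MemStagedModel κ P := by
  have hfloc : ∀ (i : Fin p) (v w : Cfg X), (∀ j : Fin p, (j : ℕ) ≤ (i : ℕ) → v j = w j) →
      fFac hp κ y0 Y i v = fFac hp κ y0 Y i w := by
    intro i v w hvw
    unfold fFac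
    by_cases hi : 1 ≤ (i : ℕ)
    · rw [if_pos hi, if_pos hi]
      have h1 : (fun (j : Fin p) (_ : ((j : Fin p) : ℕ) < (i : ℕ)) => v j) =
          (fun (j : Fin p) (_ : ((j : Fin p) : ℕ) < (i : ℕ)) => w j) := by
        funext j hj; exact hvw j (le_of_lt hj)
      rw [h1, hvw i le_rfl]
    · rw [if_neg hi, if_neg hi, hvw ⟨0, hp⟩ (Nat.zero_le _)]
  have hfsum : ∀ (i : Fin p) (v : Cfg X),
      ∑ z : X i, fFac hp κ y0 Y i (Function.update v i z) = 1 := by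
    intro i v
    by_cases hi : 1 ≤ (i : ℕ)
    · have hupd : ∀ z : X i, fFac hp κ y0 Y i (Function.update v i z)
          = Y i (κ i (fun (j : Fin p) (_ : ((j : Fin p) : ℕ) < (i : ℕ)) => v j)) z := by
        intro z
        unfold fFac
        rw [if_pos hi]
        have h1 : (fun (j : Fin p) (_ : ((j : Fin p) : ℕ) < (i : ℕ)) => Function.update v i z j)
            = (fun (j : Fin p) (_ : ((j : Fin p) : ℕ) < (i : ℕ)) => v j) := by
          funext j hj
          rw [Function.update_of_ne (fun he => by rw [Fin.ext_iff] at he; omega)]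
        rw [h1, Function.update_self]
      simp only [hupd]
      exact (hY i hi _ ⟨_, rfl⟩).2
    · have hi0 : i = ⟨0, hp⟩ := Fin.ext (show (i : ℕ) = 0 by omega)
      subst hi0
      have hupd : ∀ z : X (⟨0, hp⟩ : Fin p),
          fFac hp κ y0 Y ⟨0, hp⟩ (Function.update v ⟨0, hp⟩ z) = y0 z := by
        intro z
        unfold fFac
        rw [if_neg hi, Function.update_self]
      simp only [hupd]
      exact hy0s
  have hfpos : ∀ (i : Fin p) (v : Cfg X), 0 < fFac hp κ y0 Y i v := by
    intro i v
    unfold fFac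
    by_cases hi : 1 ≤ (i : ℕ)
    · rw [if_pos hi]; exact ((hY i hi _ ⟨_, rfl⟩).1 _).1
    · rw [if_neg hi]; exact (hy0 _).1
  have hfP : ∀ v, P v = ∏ i, fFac hp κ y0 Y i v := by
    intro v
    rw [hPf v, ← Finset.prod_filter_mul_prod_filter_not Finset.univ
      (fun i : Fin p => 1 ≤ (i : ℕ)) (fun i => fFac hp κ y0 Y i v),
      filter_not_one_le hp, Finset.prod_singleton]
    have h1 : fFac hp κ y0 Y ⟨0, hp⟩ v = y0 (v ⟨0, hp⟩) := if_neg (show ¬ (1 : ℕ) ≤ 0 by omega)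
    rw [h1, mul_comm (y0 (v ⟨0, hp⟩))]
    congr 1
    refine Finset.prod_congr rfl fun i hi => ?_
    rw [Finset.mem_filter] at hi
    exact (if_pos hi.2).symm
  have hpos : ∀ v, 0 < P v := fun v => by
    rw [hfP v]; exact Finset.prod_pos fun i _ => hfpos i v
  have hsum1 : ∑ y : Cfg X, P y = 1 := by
    have h := stagedFactorization hfloc hfsum hfP p 0 (by omega) (fun j => (hne j).some)
    rw [prefProb_zero] at h
    rw [h]
    apply Finset.prod_eq_one
    intro i hi
    simp at hi
  have key : ∀ (i : Fin p), 1 ≤ (i : ℕ) → ∀ (x : Pref X i.1) (z : X i),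
      condProb P i x z = Y i (κ i x) z := by
    intro i hi x z
    have hxv : x = fun (j : Fin p) (_ : ((j : Fin p) : ℕ) < (i : ℕ)) => cfgOf hne x j := by
      funext j hj
      exact (dif_pos hj).symm
    have hnum := condProb_num P i (cfgOf hne x) z
    have hfac1 := stagedFactorization hfloc hfsum hfP (p - ((i : ℕ) + 1)) ((i : ℕ) + 1)
      (by omega) (Function.update (cfgOf hne x) i z)
    have hfac0 := stagedFactorization hfloc hfsum hfP (p - (i : ℕ)) (i : ℕ) (by omega)
      (cfgOf hne x)
    rw [condProb, hxv, hnum, hfac1, hfac0, filter_succ_eq i.isLt,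
      Finset.prod_insert (mk_not_mem_filter i.isLt)]
    have hprodeq : ∏ j ∈ Finset.univ.filter (fun j : Fin p => (j : ℕ) < (i : ℕ)),
        fFac hp κ y0 Y j (Function.update (cfgOf hne x) i z) =
          ∏ j ∈ Finset.univ.filter (fun j : Fin p => (j : ℕ) < (i : ℕ)),
            fFac hp κ y0 Y j (cfgOf hne x) := by
      refine Finset.prod_congr rfl fun j hj => ?_
      rw [Finset.mem_filter] at hj
      refine hfloc j _ _ fun k hk => ?_
      rw [Function.update_of_ne (fun he => by rw [Fin.ext_iff] at he; omega)]
    have hfi : fFac hp κ y0 Y ⟨(i : ℕ), i.isLt⟩ (Function.update (cfgOf hne x) i z)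
        = Y i (κ i (fun (j : Fin p) (_ : ((j : Fin p) : ℕ) < (i : ℕ)) => cfgOf hne x j)) z := by
      simp only [Fin.eta]
      unfold fFac
      rw [if_pos hi]
      have h1 : (fun (j : Fin p) (_ : ((j : Fin p) : ℕ) < (i : ℕ)) => Function.update (cfgOf hne x) i z j)
          = (fun (j : Fin p) (_ : ((j : Fin p) : ℕ) < (i : ℕ)) => cfgOf hne x j) := by
        funext j hj
        rw [Function.update_of_ne (fun he => by rw [Fin.ext_iff] at he; omega)]
      rw [h1, Function.update_self]
    have hD : 0 < ∏ j ∈ Finset.univ.filter (fun j : Fin p => (j : ℕ) < (i : ℕ)),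
        fFac hp κ y0 Y j (cfgOf hne x) :=
      Finset.prod_pos fun j _ => hfpos j _
    rw [hprodeq, hfi, mul_div_assoc, div_self hD.ne', mul_one]
  exact ⟨hpos, hsum1, fun i hi x x' hxx' z => by rw [key i hi x z, key i hi x' z, hxx']⟩
noncomputable def y0Def {p : ℕ} (hp : 1 ≤ p) {X : Fin p → Type} [∀ j, Fintype (X j)]
    (P : Cfg X → ℝ) : X ⟨0, hp⟩ → ℝ :=
  fun z => condProb P ⟨0, hp⟩ (fun _ h => absurd h (Nat.not_lt_zero _)) z

noncomputable def YDef {p : ℕ} {X : Fin p → Type} [∀ j, Fintype (X j)] {C : Type}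
    (κ : (i : Fin p) → Pref X i.1 → C) (P : Cfg X → ℝ) : (i : Fin p) → C → X i → ℝ :=
  fun i c z => if h : ∃ x : Pref X i.1, κ i x = c then condProb P i h.choose z else
    (Fintype.card (X i) : ℝ)⁻¹

lemma backward_dir {p : ℕ} (hp : 1 ≤ p) {X : Fin p → Type} [∀ j, Fintype (X j)]
    (hne : ∀ j, Nonempty (X j)) (h2 : ∀ j, 2 ≤ Fintype.card (X j))
    {C : Type} (κ : (i : Fin p) → Pref X i.1 → C) (P : Cfg X → ℝ)
    (hm : MemStagedModel κ P) :
    (∃ (y0 : X ⟨0, hp⟩ → ℝ) (Y : (i : Fin p) → C → X i → ℝ),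
        (∀ z : X ⟨0, hp⟩, y0 z ∈ Set.Ioo (0 : ℝ) 1) ∧ (∑ z : X ⟨0, hp⟩, y0 z = 1) ∧
        (∀ i : Fin p, 1 ≤ (i : ℕ) → ∀ c ∈ Set.range (κ i),
          (∀ z : X i, Y i c z ∈ Set.Ioo (0 : ℝ) 1) ∧ (∑ z : X i, Y i c z = 1)) ∧
        (∀ v : Cfg X, P v = y0 (v ⟨0, hp⟩) *
          ∏ i ∈ Finset.univ.filter (fun i : Fin p => 1 ≤ (i : ℕ)),
            Y i (κ i (fun j _ => v j)) (v i))) := by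
  obtain ⟨hpos, hsum, hcond⟩ := hm
  refine ⟨y0Def hp P, YDef κ P, ?_, ?_, ?_, ?_⟩
  · intro z
    exact ⟨condProb_pos hne hpos _ _ _, condProb_lt_one hne h2 hpos _ _ _⟩
  · exact condProb_sum (prefProb_pos hne hpos _).ne'
  · intro i hi c hc
    have hEx : ∃ x : Pref X i.1, κ i x = c := hc
    have hYc : ∀ z, YDef κ P i c z = condProb P i hEx.choose z := fun z => dif_pos hEx
    refine ⟨fun z => ?_, ?_⟩
    · rw [hYc z]
      exact ⟨condProb_pos hne hpos _ _ _, condProb_lt_one hne h2 hpos _ _ _⟩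
    · simp only [hYc]
      exact condProb_sum (prefProb_pos hne hpos _).ne'
  · intro v
    have hchain := stagedChain hpos hsum hne p le_rfl v
    rw [prefProb_top] at hchain
    rw [hchain, Finset.filter_true_of_mem (fun (i : Fin p) _ => i.isLt),
      ← Finset.prod_filter_mul_prod_filter_not Finset.univ (fun i : Fin p => 1 ≤ (i : ℕ))
        (fun i => condProb P i (fun j _ => v j) (v i)),
      filter_not_one_le hp, Finset.prod_singleton, mul_comm]
    congr 1
    · unfold y0Def
      congr 1
      funext j hj
      exact absurd hj (Nat.not_lt_zero _)
    · refine Finset.prod_congr rfl fun i hi => ?_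
      rw [Finset.mem_filter] at hi
      have hEx : ∃ x : Pref X i.1,
          κ i x = κ i (fun (j : Fin p) (_ : ((j : Fin p) : ℕ) < (i : ℕ)) => v j) :=
        ⟨fun (j : Fin p) (_ : ((j : Fin p) : ℕ) < (i : ℕ)) => v j, rfl⟩
      rw [show YDef κ P i (κ i (fun j _ => v j)) (v i) = condProb P i hEx.choose (v i) from
        dif_pos hEx]
      exact (hcond i hi.2 hEx.choose _ hEx.choose_spec (v i)).symm

/-- The staged tree model is exactly the image of its parametrization
`φ_κ : Θ_κ → Δ`: a function `P` on `𝕏` is of the form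
`P x = y₀(x₁) ⬝ ∏_{i=1}^{p-1} y_{i, κᵢ(x₁,…,xᵢ)}(x_{i+1})` for parameters `y₀` and
`y_{i,c}` (strictly between `0` and `1` and summing to one, for every color `c` in the
image of `κᵢ`) if and only if `P` is a strictly positive probability mass function whose
conditional distributions coincide on prefixes in the same stage; that is, the image of
`φ_κ` equals `M_κ`. -/
theorem parametrization_image_eq_stagedModel {p : ℕ} (hp : 1 ≤ p) (X : Fin p → Type)
    [∀ j, Fintype (X j)] (h2 : ∀ j, 2 ≤ Fintype.card (X j))
    {C : Type} (κ : (i : Fin p) → Pref X i.1 → C) :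
    ∀ P : Cfg X → ℝ,
      (∃ (y0 : X ⟨0, hp⟩ → ℝ) (Y : (i : Fin p) → C → X i → ℝ),
        (∀ z : X ⟨0, hp⟩, y0 z ∈ Set.Ioo (0 : ℝ) 1) ∧ (∑ z : X ⟨0, hp⟩, y0 z = 1) ∧
        (∀ i : Fin p, 1 ≤ (i : ℕ) → ∀ c ∈ Set.range (κ i),
          (∀ z : X i, Y i c z ∈ Set.Ioo (0 : ℝ) 1) ∧ (∑ z : X i, Y i c z = 1)) ∧
        (∀ v : Cfg X, P v = y0 (v ⟨0, hp⟩) *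
          ∏ i ∈ Finset.univ.filter (fun i : Fin p => 1 ≤ (i : ℕ)),
            Y i (κ i (fun j _ => v j)) (v i))) ↔
      MemStagedModel κ P := by
  intro P
  have hne : ∀ j, Nonempty (X j) := fun j => Fintype.card_pos_iff.mp (by have := h2 j; omega)
  constructor
  · rintro ⟨y0, Y, hy0, hy0s, hY, hPf⟩
    exact forward_dir hp hne κ P y0 Y hy0 hy0s hY hPf
  · exact backward_dir hp hne h2 κ P
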